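/- Let X be a metric space, let f, g : [0,1] → X be continuous curves, let 0 < ε ≤ 1/3, and let B > 0 with B ≤ δ_F(f,g). Let 0 = s_0 ≤ s_1 ≤ … ≤ s_p = 1 and 0 = t_0 ≤ t_1 ≤ … ≤ t_q = 1, set u_i = f(s_i) and v_j = g(t_j), and suppose the subdivisions have deviation at most εB/2, i.e. for every i and every s ∈ [s_i, s_{i+1}], dist(f(s), f(s_i)) ≤ εB/2 and dist(f(s), f(s_{i+1})) ≤ εB/2, and likewise for g on each [t_j, t_{j+1}]. Let d' : X × X → ℝ satisfy |d'(x,y) − dist(x,y)| ≤ ε·dist(x,y) for all x, y ∈ X, and define δ'_dF(u,v) as the infimum over all couplings of max_{1≤l≤m} d'(u_{a_l}, v_{b_l}). Then |δ'_dF(u,v) − δ_F(f,g)| ≤ 3ε·δ_F(f,g). -/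

import Mathlib

open unitInterval

/-- A reparametrization: a continuous nondecreasing surjection of `[0,1]` onto itself. -/
def IsReparam (α : I → I) : Prop :=
  Continuous α ∧ Monotone α ∧ Function.Surjective α

/-- The continuous Fréchet distance between two curves `f, g : [0,1] → X`:
the infimum over all pairs of reparametrizations `(α, β)` of
`sup_{r ∈ [0,1]} dist (f (α r)) (g (β r))`. -/
noncomputable def frechetDist {X : Type*} [MetricSpace X] (f g : I → X) : ℝ :=
  sInf { d | ∃ α β : I → I, IsReparam α ∧ IsReparam β ∧
    d = ⨆ r : I, dist (f (α r)) (g (β r)) }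

/-- `IsCoupling p q m a b`: the index pairs `(a 0, b 0), …, (a m, b m)` form a coupling
between sequences indexed by `0,…,p` and `0,…,q`. -/
def IsCoupling (p q m : ℕ) (a b : ℕ → ℕ) : Prop :=
  a 0 = 0 ∧ b 0 = 0 ∧ a m = p ∧ b m = q ∧
  (∀ l < m, a (l + 1) = a l ∨ a (l + 1) = a l + 1) ∧
  (∀ l < m, b (l + 1) = b l ∨ b (l + 1) = b l + 1)

/-- The discrete Fréchet distance between the finite sequences `u 0, …, u p` and
`v 0, …, v q`, computed with respect to the distance function `d`: the infimum over all
couplings of the maximum of `d` over the coupled pairs. -/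
noncomputable def discreteFrechetWith {X : Type*} (d : X → X → ℝ)
    (p q : ℕ) (u v : ℕ → X) : ℝ :=
  sInf { c | ∃ m : ℕ, ∃ a b : ℕ → ℕ, IsCoupling p q m a b ∧
    c = (Finset.range (m + 1)).sup' Finset.nonempty_range_add_one
      (fun l => d (u (a l)) (v (b l))) }

/-- The discrete Fréchet distance with respect to the metric of `X`. -/
noncomputable def discreteFrechet {X : Type*} [MetricSpace X]
    (p q : ℕ) (u v : ℕ → X) : ℝ :=
  discreteFrechetWith dist p q u v

/-!
A coupling of the vertex sequences and a pair of reparametrizations can be traded for each other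
at a cost of `2η` in the leash length, where `η = εB/2` is the deviation of the subdivisions. A
coupling is realised by reparametrizations that interpolate linearly between its vertices.
Conversely, for reparametrizations `(α, β)` let `R i` and `P j` be the first times at which `α`
reaches `s i` and `β` reaches `t j`; merging the sorted sequences `R` and `P` gives a coupling
in which the cells `[R a, R (a + 1)]` and `[P b, P (b + 1)]` of every coupled pair `(a, b)` share
a time `w`, and `f (s a)`, `g (t b)` lie within `η` of `f (α w)`, `g (β w)`.
So the exact discrete Fréchet distance is within `εB ≤ ε δ_F` of `δ_F`, and the bounds
`(1 - ε) dist ≤ d' ≤ (1 + ε) dist` rescale it by at most a factor `1 ± ε`, giving an error of at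
most `(2ε + ε²) δ_F ≤ 3ε δ_F`.
-/

open Finset

def IsSubdivision (p : ℕ) (s : ℕ → I) : Prop :=
  s 0 = 0 ∧ s p = 1 ∧ ∀ i < p, s i ≤ s (i + 1)

lemma IsSubdivision.pos {p : ℕ} {s : ℕ → I} (hs : IsSubdivision p s) : 0 < p := by
  refine Nat.pos_of_ne_zero fun hp => zero_ne_one (α := I) ?_
  rw [← hs.1, ← hs.2.1, hp]

section Reparam

variable {α : I → I}

lemma isReparam_id : IsReparam id := ⟨continuous_id, monotone_id, Function.surjective_id⟩

lemma IsReparam.map_zero (hα : IsReparam α) : α 0 = 0 := by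
  obtain ⟨r, hr⟩ := hα.2.2 0
  exact le_antisymm ((hα.2.1 nonneg').trans_eq hr) nonneg'

lemma IsReparam.map_one (hα : IsReparam α) : α 1 = 1 := by
  obtain ⟨r, hr⟩ := hα.2.2 1
  exact le_antisymm le_one' (hr.symm.trans_le (hα.2.1 le_one'))

lemma IsReparam.of_map_zero_one (hc : Continuous α) (hm : Monotone α) (h0 : α 0 = 0)
    (h1 : α 1 = 1) : IsReparam α := by
  refine ⟨hc, hm, fun y => ?_⟩
  obtain ⟨x, -, hx⟩ := intermediate_value_Icc (nonneg' : (0 : I) ≤ 1) hc.continuousOn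
    (show y ∈ Set.Icc (α 0) (α 1) by rw [h0, h1]; exact ⟨nonneg', le_one'⟩)
  exact ⟨x, hx⟩

end Reparam

section HitTime

noncomputable def hitTime (α : I → I) (y : I) : I := sInf (α ⁻¹' Set.Ici y)

lemma hitTime_mono (α : I → I) : Monotone (hitTime α) := fun _ _ h =>
  sInf_le_sInf (Set.preimage_mono (Set.Ici_subset_Ici.2 h))

lemma hitTime_zero (α : I → I) : hitTime α 0 = 0 :=
  le_antisymm (sInf_le (show (0 : I) ≤ α 0 from nonneg')) nonneg'

lemma IsReparam.map_hitTime {α : I → I} (hα : IsReparam α) (y : I) : α (hitTime α y) = y := by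
  have hmem : y ≤ α (hitTime α y) :=
    IsClosed.sInf_mem ⟨1, show y ≤ α 1 by rw [hα.map_one]; exact le_one'⟩
      (isClosed_Ici.preimage hα.1)
  obtain ⟨x, hx, hxy⟩ := intermediate_value_Icc (nonneg' : 0 ≤ hitTime α y) hα.1.continuousOn
    (show y ∈ Set.Icc (α 0) (α (hitTime α y)) from ⟨by rw [hα.map_zero]; exact nonneg', hmem⟩)
  have hle : hitTime α y ≤ x := sInf_le (show y ≤ α x from hxy.ge)
  rwa [le_antisymm hx.2 hle] at hxy

/-- Padding with `1` past `p` lets the merge of two such sequences run to the end. -/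
noncomputable def hitTimes (α : I → I) (p : ℕ) (s : ℕ → I) (i : ℕ) : I :=
  if i ≤ p then hitTime α (s i) else 1

variable {α : I → I} {p : ℕ} {s : ℕ → I}

lemma hitTimes_of_le {i : ℕ} (hi : i ≤ p) : hitTimes α p s i = hitTime α (s i) := if_pos hi

lemma hitTimes_zero (hs : IsSubdivision p s) : hitTimes α p s 0 = 0 := by
  rw [hitTimes_of_le p.zero_le, hs.1, hitTime_zero]

lemma hitTimes_of_lt {i : ℕ} (hi : p < i) : hitTimes α p s i = 1 := if_neg hi.not_ge

lemma hitTimes_mono (hs : IsSubdivision p s) : Monotone (hitTimes α p s) := by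
  refine monotone_nat_of_le_succ fun i => ?_
  by_cases hi : i + 1 ≤ p
  · rw [hitTimes_of_le hi, hitTimes_of_le (Nat.le_of_succ_le hi)]
    exact hitTime_mono α (hs.2.2 i hi)
  · rw [hitTimes_of_lt (not_le.1 hi)]
    exact le_one'

lemma IsReparam.map_hitTimes (hα : IsReparam α) {i : ℕ} (hi : i ≤ p) :
    α (hitTimes α p s i) = s i := by
  rw [hitTimes_of_le hi, hα.map_hitTime]

end HitTime

section Coupling

def IsStepPath (p m : ℕ) (a : ℕ → ℕ) : Prop :=
  a 0 = 0 ∧ a m = p ∧ ∀ l < m, a (l + 1) = a l ∨ a (l + 1) = a l + 1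

variable {p q m : ℕ} {a b : ℕ → ℕ}

lemma isCoupling_iff : IsCoupling p q m a b ↔ IsStepPath p m a ∧ IsStepPath q m b := by
  unfold IsCoupling IsStepPath
  tauto

lemma IsStepPath.le (ha : IsStepPath p m a) {l : ℕ} (hl : l ≤ m) : a l ≤ p := by
  induction hl using Nat.decreasingInduction with
  | self => exact ha.2.1.le
  | of_succ k hk ih => rcases ha.2.2 k hk with h | h <;> omega

lemma exists_isCoupling (p q : ℕ) : ∃ m a b, IsCoupling p q m a b :=
  ⟨p + q, fun l => min l p, fun l => l - min l p, by
    refine ⟨?_, ?_, ?_, ?_, fun l _ => ?_, fun l _ => ?_⟩ <;> dsimp only <;> omega⟩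

def mergeStep {β : Type*} [LinearOrder β] (R P : ℕ → β) (p q : ℕ) (x : ℕ × ℕ) : ℕ × ℕ :=
  if x.1 < p ∧ (q ≤ x.2 ∨ R (x.1 + 1) ≤ P (x.2 + 1)) then (x.1 + 1, x.2) else (x.1, x.2 + 1)

lemma mergeStep_eq {β : Type*} [LinearOrder β] (R P : ℕ → β) (p q : ℕ) (x : ℕ × ℕ) :
    mergeStep R P p q x = (x.1 + 1, x.2) ∨ mergeStep R P p q x = (x.1, x.2 + 1) := by
  unfold mergeStep
  split_ifs
  exacts [Or.inl rfl, Or.inr rfl]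

variable {β : Type*} [LinearOrder β] {R P : ℕ → β}

lemma mergeStep_invariant (hR : Monotone R) (hP : Monotone P) (hRp : R p ≤ P (q + 1))
    (hPq : P q ≤ R (p + 1)) {x : ℕ × ℕ} (hx : x.1 + x.2 < p + q)
    (hinv : x.1 ≤ p ∧ x.2 ≤ q ∧ R x.1 ≤ P (x.2 + 1) ∧ P x.2 ≤ R (x.1 + 1)) :
    let y := mergeStep R P p q x
    y.1 ≤ p ∧ y.2 ≤ q ∧ R y.1 ≤ P (y.2 + 1) ∧ P y.2 ≤ R (y.1 + 1) := by
  obtain ⟨a, b⟩ := x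
  obtain ⟨hap, hbq, hRP, hPR⟩ := hinv
  dsimp only at *
  unfold mergeStep
  split_ifs with h
  · obtain ⟨ha, hb | hb⟩ := h
    · refine ⟨ha, hbq, ?_, hPR.trans (hR (by omega))⟩
      obtain rfl : b = q := by omega
      exact (hR ha).trans hRp
    · exact ⟨ha, hbq, hb, hPR.trans (hR (by omega))⟩
  · rw [not_and_or, not_lt, not_or, not_le, not_le] at h
    rcases h with ha | ⟨hb, hlt⟩
    · obtain rfl : a = p := by omega
      exact ⟨le_rfl, by omega, hRP.trans (hP (by omega)), (hP (by omega)).trans hPq⟩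
    · exact ⟨hap, hb, hRP.trans (hP (by omega)), hlt.le⟩

theorem exists_isCoupling_cells_overlap (hR : Monotone R) (hP : Monotone P)
    (hR0 : R 0 ≤ P 1) (hP0 : P 0 ≤ R 1) (hRp : R p ≤ P (q + 1)) (hPq : P q ≤ R (p + 1)) :
    ∃ a b, IsCoupling p q (p + q) a b ∧
      ∀ l ≤ p + q, R (a l) ≤ P (b l + 1) ∧ P (b l) ≤ R (a l + 1) := by
  set w : ℕ → ℕ × ℕ := fun l => (mergeStep R P p q)^[l] (0, 0)
  have hsucc (l : ℕ) : w (l + 1) = mergeStep R P p q (w l) := Function.iterate_succ_apply' ..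
  have hsum (l : ℕ) : (w l).1 + (w l).2 = l := by
    induction l with
    | zero => rfl
    | succ l ih =>
      rcases mergeStep_eq R P p q (w l) with h | h <;> rw [hsucc, h] <;> dsimp only <;> omega
  have hinv (l : ℕ) (hl : l ≤ p + q) :
      (w l).1 ≤ p ∧ (w l).2 ≤ q ∧ R (w l).1 ≤ P ((w l).2 + 1) ∧ P (w l).2 ≤ R ((w l).1 + 1) := by
    induction l with
    | zero => exact ⟨p.zero_le, q.zero_le, hR0, hP0⟩
    | succ l ih =>
      rw [hsucc]
      exact mergeStep_invariant hR hP hRp hPq (by rw [hsum]; omega) (ih (by omega))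
  have hend := hinv (p + q) le_rfl
  have hend' := hsum (p + q)
  refine ⟨fun l => (w l).1, fun l => (w l).2,
    ⟨rfl, rfl, by dsimp only; omega, by dsimp only; omega, fun l _ => ?_, fun l _ => ?_⟩,
    fun l hl => (hinv l hl).2.2⟩ <;>
    rcases mergeStep_eq R P p q (w l) with h | h <;>
    simp only [hsucc, h, true_or, or_true]

end Coupling

section Infima

variable {X : Type*} {p q : ℕ} {u v : ℕ → X}

lemma discreteFrechetWith_le (d : X → X → ℝ) {m : ℕ} {a b : ℕ → ℕ} (hab : IsCoupling p q m a b) :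
    discreteFrechetWith d p q u v ≤
      (range (m + 1)).sup' nonempty_range_add_one (fun l => d (u (a l)) (v (b l))) := by
  refine csInf_le ⟨d (u 0) (v 0), ?_⟩ ⟨m, a, b, hab, rfl⟩
  rintro _ ⟨m, a, b, hab, rfl⟩
  -- every coupling starts at `(0, 0)`
  have h0 := le_sup' (fun l => d (u (a l)) (v (b l))) (mem_range.2 m.succ_pos)
  rwa [hab.1, hab.2.1] at h0

lemma le_discreteFrechetWith {d : X → X → ℝ} {c : ℝ}
    (h : ∀ m a b, IsCoupling p q m a b →
      c ≤ (range (m + 1)).sup' nonempty_range_add_one (fun l => d (u (a l)) (v (b l)))) :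
    c ≤ discreteFrechetWith d p q u v := by
  obtain ⟨m, a, b, hab⟩ := exists_isCoupling p q
  refine le_csInf ⟨_, m, a, b, hab, rfl⟩ ?_
  rintro _ ⟨m, a, b, hab, rfl⟩
  exact h m a b hab

lemma discreteFrechetWith_mono {d₁ d₂ : X → X → ℝ} (h : ∀ x y, d₁ x y ≤ d₂ x y) :
    discreteFrechetWith d₁ p q u v ≤ discreteFrechetWith d₂ p q u v :=
  le_discreteFrechetWith fun _ _ _ hab => (discreteFrechetWith_le d₁ hab).trans
    (sup'_mono_fun fun _ _ => h _ _)

lemma discreteFrechetWith_const_mul (d : X → X → ℝ) {c : ℝ} (hc : 0 ≤ c) :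
    discreteFrechetWith (fun x y => c * d x y) p q u v = c * discreteFrechetWith d p q u v := by
  unfold discreteFrechetWith
  rw [← smul_eq_mul, ← Real.sInf_smul_of_nonneg hc]
  congr 1
  ext x
  simp only [Set.mem_smul_set, Set.mem_ofPred_eq, smul_eq_mul]
  constructor
  · rintro ⟨m, a, b, hab, rfl⟩
    exact ⟨_, ⟨m, a, b, hab, rfl⟩, mul₀_sup' hc _ _ _⟩
  · rintro ⟨_, ⟨m, a, b, hab, rfl⟩, rfl⟩
    exact ⟨m, a, b, hab, mul₀_sup' hc _ _ _⟩

variable [MetricSpace X] {f g : I → X}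

lemma frechetDist_le {α β : I → I} (hα : IsReparam α) (hβ : IsReparam β) :
    frechetDist f g ≤ ⨆ r, dist (f (α r)) (g (β r)) := by
  refine csInf_le ⟨0, ?_⟩ ⟨α, β, hα, hβ, rfl⟩
  rintro _ ⟨α, β, -, -, rfl⟩
  exact Real.iSup_nonneg fun _ => dist_nonneg

lemma le_frechetDist {c : ℝ}
    (h : ∀ α β, IsReparam α → IsReparam β → c ≤ ⨆ r, dist (f (α r)) (g (β r))) :
    c ≤ frechetDist f g := by
  refine le_csInf ⟨_, id, id, isReparam_id, isReparam_id, rfl⟩ ?_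
  rintro _ ⟨α, β, hα, hβ, rfl⟩
  exact h α β hα hβ

end Infima

section PiecewiseLinear

/-- The piecewise linear interpolation of `c` at the nodes `k / m`; as a sum of clamped ramps it
is continuous by construction. -/
noncomputable def piecewiseLinear (m : ℕ) (c : ℕ → ℝ) (x : ℝ) : ℝ :=
  c 0 + ∑ l ∈ range m, (c (l + 1) - c l) * max 0 (min 1 (m * x - l))

variable {m : ℕ} {c : ℕ → ℝ}

lemma continuous_piecewiseLinear : Continuous (piecewiseLinear m c) := by
  unfold piecewiseLinear
  fun_prop

lemma monotone_piecewiseLinear (hc : ∀ l < m, c l ≤ c (l + 1)) :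
    Monotone (piecewiseLinear m c) := fun x y hxy => by
  unfold piecewiseLinear
  gcongr with l hl
  linarith [hc l (mem_range.1 hl)]

lemma piecewiseLinear_eq {k : ℕ} (hk : k ≤ m) {x : ℝ} (hx : m * x = k) :
    piecewiseLinear m c x = c k := by
  have hlow : ∀ l ∈ range k, (c (l + 1) - c l) * max 0 (min 1 (m * x - l)) = c (l + 1) - c l := by
    intro l hl
    have : (l : ℝ) + 1 ≤ k := by exact_mod_cast mem_range.1 hl
    rw [hx, min_eq_left (by linarith), max_eq_right zero_le_one, mul_one]
  have hhigh : ∀ l ∈ Ico k m, (c (l + 1) - c l) * max 0 (min 1 (m * x - l)) = 0 := by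
    intro l hl
    have : (k : ℝ) ≤ l := by exact_mod_cast (mem_Ico.1 hl).1
    rw [hx, min_eq_right (by linarith), max_eq_left (by linarith), mul_zero]
  rw [piecewiseLinear, ← sum_range_add_sum_Ico _ hk, sum_congr rfl hlow, sum_congr rfl hhigh,
    sum_const_zero, add_zero, sum_range_sub]
  ring

theorem exists_isReparam_interpolating {c : ℕ → I} (hm : 0 < m) (h0 : c 0 = 0) (h1 : c m = 1)
    (hc : ∀ l < m, c l ≤ c (l + 1)) :
    ∃ α : I → I, IsReparam α ∧ ∀ l < m, ∀ r : I, (l : ℝ) ≤ m * r → (m : ℝ) * r ≤ l + 1 →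
      c l ≤ α r ∧ α r ≤ c (l + 1) := by
  set F := piecewiseLinear m (fun l => c l)
  have hmR : (0 : ℝ) < m := Nat.cast_pos.2 hm
  have hF (k : ℕ) (hk : k ≤ m) : F (k / m) = c k :=
    piecewiseLinear_eq hk (mul_div_cancel₀ _ hmR.ne')
  have hFmono : Monotone F := monotone_piecewiseLinear hc
  have hF0 : F 0 = 0 := by simpa [h0] using hF 0 m.zero_le
  have hF1 : F 1 = 1 := by simpa [h1, hmR.ne'] using hF m le_rfl
  have hFI (r : I) : F r ∈ I := ⟨hF0 ▸ hFmono r.2.1, hF1 ▸ hFmono r.2.2⟩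
  let α : I → I := fun r => ⟨F r, hFI r⟩
  have hαc : Continuous α := (continuous_piecewiseLinear.comp continuous_subtype_val).subtype_mk _
  refine ⟨α, .of_map_zero_one hαc (fun r r' h => hFmono h) (Subtype.ext hF0) (Subtype.ext hF1),
    fun l hl r hr1 hr2 => ?_⟩
  constructor
  · show (c l : ℝ) ≤ F r
    rw [← hF l hl.le]
    exact hFmono ((div_le_iff₀ hmR).2 (by linarith))
  · show F r ≤ c (l + 1)
    rw [← hF (l + 1) hl]
    exact hFmono ((le_div_iff₀ hmR).2 (by push_cast; linarith))

lemma exists_nat_le_mul_le_succ (hm : 0 < m) (r : I) :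
    ∃ l < m, (l : ℝ) ≤ m * r ∧ (m : ℝ) * r ≤ l + 1 := by
  have hmr : 0 ≤ (m : ℝ) * r := mul_nonneg m.cast_nonneg r.2.1
  rcases r.2.2.lt_or_eq with hr | hr
  · refine ⟨⌊(m : ℝ) * r⌋₊, (Nat.floor_lt hmr).2 ?_, Nat.floor_le hmr, (Nat.lt_floor_add_one _).le⟩
    simpa using mul_lt_mul_of_pos_left hr (Nat.cast_pos.2 hm)
  · refine ⟨m - 1, by omega, ?_, ?_⟩ <;> rw [hr, Nat.cast_sub hm] <;> push_cast <;> linarith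

end PiecewiseLinear

section Frechet

def DeviationLE {X : Type*} [MetricSpace X] (f : I → X) (p : ℕ) (s : ℕ → I) (η : ℝ) : Prop :=
  ∀ i < p, ∀ x : I, s i ≤ x → x ≤ s (i + 1) → dist (f x) (f (s i)) ≤ η

variable {X : Type*} [MetricSpace X] {f g : I → X} {p q : ℕ} {s t : ℕ → I} {η : ℝ}

lemma dist_le_of_mem_cell (hs : IsSubdivision p s) (hη : 0 ≤ η)
    (hdev : DeviationLE f p s η)
    {i : ℕ} (hi : i ≤ p) {x : I} (h1 : s i ≤ x) (h2 : i < p → x ≤ s (i + 1)) :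
    dist (f x) (f (s i)) ≤ η := by
  rcases hi.lt_or_eq with hi | rfl
  · exact hdev i hi x h1 (h2 hi)
  · rw [le_antisymm (hs.2.1 ▸ le_one') h1, dist_self]
    exact hη

lemma IsStepPath.exists_isReparam {m : ℕ} {a : ℕ → ℕ} (ha : IsStepPath p m a) (hm : 0 < m)
    (hs : IsSubdivision p s) (hη : 0 ≤ η)
    (hdev : DeviationLE f p s η) :
    ∃ α : I → I, IsReparam α ∧ ∀ l < m, ∀ r : I, (l : ℝ) ≤ m * r → (m : ℝ) * r ≤ l + 1 →
      dist (f (α r)) (f (s (a l))) ≤ η := by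
  have hstep (l : ℕ) (hl : l < m) :
      s (a l) ≤ s (a (l + 1)) ∧ (a l < p → s (a (l + 1)) ≤ s (a l + 1)) := by
    have hle : a (l + 1) ≤ p := ha.le hl
    rcases ha.2.2 l hl with h | h <;> rw [h]
    · exact ⟨le_rfl, hs.2.2 (a l)⟩
    · exact ⟨hs.2.2 (a l) (by omega), fun _ => le_rfl⟩
  obtain ⟨α, hα, hαc⟩ := exists_isReparam_interpolating (c := fun l => s (a l)) hm
    (by rw [ha.1, hs.1]) (by rw [ha.2.1, hs.2.1]) (fun l hl => (hstep l hl).1)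
  refine ⟨α, hα, fun l hl r hr1 hr2 => ?_⟩
  obtain ⟨h1, h2⟩ := hαc l hl r hr1 hr2
  exact dist_le_of_mem_cell hs hη hdev (ha.le hl.le) h1 fun h => h2.trans ((hstep l hl).2 h)

theorem exists_isReparam_le_of_isCoupling (hs : IsSubdivision p s) (ht : IsSubdivision q t)
    (hη : 0 ≤ η)
    (hdevf : DeviationLE f p s η)
    (hdevg : DeviationLE g q t η)
    {m : ℕ} {a b : ℕ → ℕ} (hab : IsCoupling p q m a b) :
    ∃ α β : I → I, IsReparam α ∧ IsReparam β ∧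
      (⨆ r, dist (f (α r)) (g (β r))) ≤
        (range (m + 1)).sup' nonempty_range_add_one (fun l => dist (f (s (a l))) (g (t (b l))))
          + 2 * η := by
  obtain ⟨ha, hb⟩ := isCoupling_iff.1 hab
  have hm : 0 < m := Nat.pos_of_ne_zero fun hm0 => hs.pos.ne (by rw [← ha.2.1, hm0, ha.1])
  obtain ⟨α, hα, hαc⟩ := ha.exists_isReparam hm hs hη hdevf
  obtain ⟨β, hβ, hβc⟩ := hb.exists_isReparam hm ht hη hdevg
  refine ⟨α, β, hα, hβ, ciSup_le fun r => ?_⟩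
  obtain ⟨l, hl, hr1, hr2⟩ := exists_nat_le_mul_le_succ hm r
  have hcoupled := le_sup' (fun l => dist (f (s (a l))) (g (t (b l))))
    (mem_range.2 (Nat.lt_succ_of_lt hl))
  calc dist (f (α r)) (g (β r))
      ≤ dist (f (α r)) (f (s (a l))) + dist (f (s (a l))) (g (t (b l)))
        + dist (g (t (b l))) (g (β r)) := dist_triangle4 _ _ _ _
    _ ≤ η + (range (m + 1)).sup' nonempty_range_add_one
          (fun l => dist (f (s (a l))) (g (t (b l)))) + η := by
        gcongr
        · exact hαc l hl r hr1 hr2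
        · rw [dist_comm]
          exact hβc l hl r hr1 hr2
    _ = _ := by ring

lemma IsReparam.dist_le_of_mem_hitTimes {α : I → I} (hα : IsReparam α) (hs : IsSubdivision p s)
    (hη : 0 ≤ η)
    (hdev : DeviationLE f p s η)
    {i : ℕ} (hi : i ≤ p) {w : I} (h1 : hitTimes α p s i ≤ w) (h2 : w ≤ hitTimes α p s (i + 1)) :
    dist (f (α w)) (f (s i)) ≤ η :=
  dist_le_of_mem_cell hs hη hdev hi ((hα.map_hitTimes hi).symm.trans_le (hα.2.1 h1))
    fun hi' => (hα.2.1 h2).trans_eq (hα.map_hitTimes hi')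

theorem exists_isCoupling_le_of_isReparam (hf : Continuous f) (hg : Continuous g)
    (hs : IsSubdivision p s) (ht : IsSubdivision q t) (hη : 0 ≤ η)
    (hdevf : DeviationLE f p s η)
    (hdevg : DeviationLE g q t η)
    {α β : I → I} (hα : IsReparam α) (hβ : IsReparam β) :
    ∃ m a b, IsCoupling p q m a b ∧
      (range (m + 1)).sup' nonempty_range_add_one (fun l => dist (f (s (a l))) (g (t (b l))))
        ≤ (⨆ r, dist (f (α r)) (g (β r))) + 2 * η := by
  set R := hitTimes α p s
  set P := hitTimes β q t
  have hR := hitTimes_mono (α := α) hs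
  have hP := hitTimes_mono (α := β) ht
  obtain ⟨a, b, hab, hoverlap⟩ := exists_isCoupling_cells_overlap hR hP
    (by rw [hitTimes_zero hs]; exact nonneg') (by rw [hitTimes_zero ht]; exact nonneg')
    (by rw [hitTimes_of_lt q.lt_succ_self]; exact le_one')
    (by rw [hitTimes_of_lt p.lt_succ_self]; exact le_one')
  obtain ⟨ha, hb⟩ := isCoupling_iff.1 hab
  have hbdd : BddAbove (Set.range fun r => dist (f (α r)) (g (β r))) :=
    (isCompact_range ((hf.comp hα.1).dist (hg.comp hβ.1))).bddAbove
  refine ⟨p + q, a, b, hab, sup'_le _ _ fun l hl => ?_⟩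
  have hl' : l ≤ p + q := Nat.lt_succ_iff.1 (mem_range.1 hl)
  obtain ⟨hRP, hPR⟩ := hoverlap l hl'
  -- `w` lies in both of the overlapping cells
  set w := max (R (a l)) (P (b l))
  calc dist (f (s (a l))) (g (t (b l)))
      ≤ dist (f (s (a l))) (f (α w)) + dist (f (α w)) (g (β w))
        + dist (g (β w)) (g (t (b l))) := dist_triangle4 _ _ _ _
    _ ≤ η + (⨆ r, dist (f (α r)) (g (β r))) + η := by
        gcongr
        · rw [dist_comm]
          exact hα.dist_le_of_mem_hitTimes hs hη hdevf (ha.le hl') (le_max_left _ _)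
            (max_le (hR (a l).le_succ) hPR)
        · exact le_ciSup hbdd w
        · exact hβ.dist_le_of_mem_hitTimes ht hη hdevg (hb.le hl') (le_max_right _ _)
            (max_le hRP (hP (b l).le_succ))
    _ = _ := by ring

end Frechet

section Sandwich

variable {X : Type*} [MetricSpace X] {f g : I → X} {p q : ℕ} {s t : ℕ → I} {η : ℝ}

theorem frechetDist_le_discreteFrechet_add (hs : IsSubdivision p s) (ht : IsSubdivision q t)
    (hη : 0 ≤ η)
    (hdevf : DeviationLE f p s η)
    (hdevg : DeviationLE g q t η) :
    frechetDist f g ≤ discreteFrechet p q (fun i => f (s i)) (fun j => g (t j)) + 2 * η := by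
  rw [← sub_le_iff_le_add]
  refine le_discreteFrechetWith fun m a b hab => ?_
  obtain ⟨α, β, hα, hβ, hle⟩ := exists_isReparam_le_of_isCoupling hs ht hη hdevf hdevg hab
  linarith [frechetDist_le (f := f) (g := g) hα hβ]

theorem discreteFrechet_le_frechetDist_add (hf : Continuous f) (hg : Continuous g)
    (hs : IsSubdivision p s) (ht : IsSubdivision q t) (hη : 0 ≤ η)
    (hdevf : DeviationLE f p s η)
    (hdevg : DeviationLE g q t η) :
    discreteFrechet p q (fun i => f (s i)) (fun j => g (t j)) ≤ frechetDist f g + 2 * η := by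
  rw [← sub_le_iff_le_add]
  refine le_frechetDist fun α β hα hβ => ?_
  obtain ⟨m, a, b, hab, hle⟩ :=
    exists_isCoupling_le_of_isReparam hf hg hs ht hη hdevf hdevg hα hβ
  have hD : discreteFrechet p q (fun i => f (s i)) (fun j => g (t j)) ≤ _ :=
    discreteFrechetWith_le dist hab
  linarith

end Sandwich

/-- computing the discrete Fréchet distance with an `ε`-approximate distance
oracle `d'` on the refined vertex sequences yields a `3ε`-approximation of the continuous
Fréchet distance. -/
theorem approx_discreteFrechet_approx
    {X : Type*} [MetricSpace X] (f g : I → X) (hf : Continuous f) (hg : Continuous g)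
    (ε : ℝ) (hε : 0 < ε) (hε' : ε ≤ 1 / 3)
    (B : ℝ) (hB : 0 < B) (hBle : B ≤ frechetDist f g)
    (p q : ℕ) (s t : ℕ → I)
    (hs0 : s 0 = 0) (hsp : s p = 1) (hsmono : ∀ i < p, s i ≤ s (i + 1))
    (ht0 : t 0 = 0) (htq : t q = 1) (htmono : ∀ j < q, t j ≤ t (j + 1))
    (hdevf : ∀ i < p, ∀ x : I, s i ≤ x → x ≤ s (i + 1) →
      dist (f x) (f (s i)) ≤ ε * B / 2 ∧ dist (f x) (f (s (i + 1))) ≤ ε * B / 2)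
    (hdevg : ∀ j < q, ∀ x : I, t j ≤ x → x ≤ t (j + 1) →
      dist (g x) (g (t j)) ≤ ε * B / 2 ∧ dist (g x) (g (t (j + 1))) ≤ ε * B / 2)
    (d' : X → X → ℝ) (hd' : ∀ x y : X, |d' x y - dist x y| ≤ ε * dist x y) :
    |discreteFrechetWith d' p q (fun i => f (s i)) (fun j => g (t j)) - frechetDist f g| ≤
      3 * ε * frechetDist f g := by
  set δ := frechetDist f g
  set D := discreteFrechet p q (fun i => f (s i)) (fun j => g (t j))
  have hs : IsSubdivision p s := ⟨hs0, hsp, hsmono⟩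
  have ht : IsSubdivision q t := ⟨ht0, htq, htmono⟩
  have hη : 0 ≤ ε * B / 2 := by positivity
  have hdevf' : DeviationLE f p s (ε * B / 2) := fun i hi x h1 h2 => (hdevf i hi x h1 h2).1
  have hdevg' : DeviationLE g q t (ε * B / 2) := fun j hj x h1 h2 => (hdevg j hj x h1 h2).1
  have hδD := frechetDist_le_discreteFrechet_add hs ht hη hdevf' hdevg'
  have hDδ := discreteFrechet_le_frechetDist_add hf hg hs ht hη hdevf' hdevg'
  have hD'le : discreteFrechetWith d' p q (fun i => f (s i)) (fun j => g (t j)) ≤ (1 + ε) * D :=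
    (discreteFrechetWith_mono fun x y => by linarith [(abs_le.1 (hd' x y)).2]).trans_eq
      (discreteFrechetWith_const_mul dist (by linarith))
  have hle_D' : (1 - ε) * D ≤ discreteFrechetWith d' p q (fun i => f (s i)) (fun j => g (t j)) :=
    (discreteFrechetWith_const_mul dist (by linarith)).symm.trans_le
      (discreteFrechetWith_mono fun x y => by linarith [(abs_le.1 (hd' x y)).1])
  have hεB : ε * B ≤ ε * δ := mul_le_mul_of_nonneg_left hBle hε.le
  have hδ : 0 ≤ δ := hB.le.trans hBle
  rw [abs_le]
  constructor
  · nlinarith [mul_le_mul_of_nonneg_left hδD (by linarith : 0 ≤ 1 - ε)]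
  · nlinarith [mul_le_mul_of_nonneg_left hDδ (by linarith : 0 ≤ 1 + ε)]
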